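/- Fix n ≥ 1, an index i ∈ Fin n, and a vector v ∈ ℂⁿ with v_i = 0 and v ≠ 0; set ω = ‖v‖ (Euclidean norm). Let H be the n×n complex Hermitian matrix with entries H_{jk} = [j = i]·conj(v_k) + v_j·[k = i], where [P] is 1 if P holds and 0 otherwise. Then for every t ∈ ℝ, exp(−i·t·H)·e_i = cos(ω·t)·e_i − i·(sin(ω·t)/ω)·v, where e_i is the i-th standard basis vector and exp denotes the matrix exponential. -/

import Mathlib

open Matrix

/-- Action of a matrix on the Euclidean space `ℂⁿ` by matrix-vector multiplication. -/
noncomputable def matVec {n : ℕ} (M : Matrix (Fin n) (Fin n) ℂ)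
    (ψ : EuclideanSpace ℂ (Fin n)) : EuclideanSpace ℂ (Fin n) :=
  Matrix.toEuclideanLin M ψ

/-- The Hamiltonian coupling site `i` to the mode `v`: `H_{jk} = [j = i]·conj(v_k) + v_j·[k = i]`. -/
def coupleH {n : ℕ} (i : Fin n) (v : EuclideanSpace ℂ (Fin n)) : Matrix (Fin n) (Fin n) ℂ :=
  fun j k => (if j = i then (starRingEnd ℂ) (v k) else 0) + (if k = i then v j else 0)

attribute [local instance] Matrix.linftyOpNormedRing Matrix.linftyOpNormedAlgebra

namespace CoupledModesAux

variable {n : ℕ}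

lemma matVec_apply (M : Matrix (Fin n) (Fin n) ℂ) (ψ : EuclideanSpace ℂ (Fin n)) (j : Fin n) :
    matVec M ψ j = ∑ k, M j k * ψ k := by
  simp [matVec, Matrix.toEuclideanLin, Matrix.mulVec, dotProduct]

lemma matVec_one (ψ : EuclideanSpace ℂ (Fin n)) : matVec 1 ψ = ψ := by
  ext j
  simp [matVec_apply, Matrix.one_apply]

lemma matVec_smulM (c : ℂ) (M : Matrix (Fin n) (Fin n) ℂ) (ψ : EuclideanSpace ℂ (Fin n)) :
    matVec (c • M) ψ = c • matVec M ψ := by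
  ext j
  simp [matVec_apply, Finset.mul_sum, mul_assoc]

lemma matVec_smulV (M : Matrix (Fin n) (Fin n) ℂ) (c : ℂ) (ψ : EuclideanSpace ℂ (Fin n)) :
    matVec M (c • ψ) = c • matVec M ψ := by
  simp only [matVec, LinearMap.map_smul]

lemma matVec_addM (M N : Matrix (Fin n) (Fin n) ℂ) (ψ : EuclideanSpace ℂ (Fin n)) :
    matVec (M + N) ψ = matVec M ψ + matVec N ψ := by
  ext j
  simp [matVec_apply, add_mul, Finset.sum_add_distrib]

lemma matVec_mul (M N : Matrix (Fin n) (Fin n) ℂ) (ψ : EuclideanSpace ℂ (Fin n)) :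
    matVec (M * N) ψ = matVec M (matVec N ψ) := by
  ext j
  simp only [matVec_apply, Matrix.mul_apply, Finset.sum_mul, Finset.mul_sum]
  rw [Finset.sum_comm]
  exact Finset.sum_congr rfl fun l _ => Finset.sum_congr rfl fun k _ => by ring

end CoupledModesAux

open CoupledModesAux in
/-- Two-coupled-modes dynamics: with `v i = 0`, `v ≠ 0`, `ω = ‖v‖`, the evolution generated
by `coupleH i v` satisfies `exp(−i·t·H)·e_i = cos(ω·t)·e_i − i·(sin(ω·t)/ω)·v`. -/
theorem coupled_modes_evolution {n : ℕ} (hn : 1 ≤ n) (i : Fin n)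
    (v : EuclideanSpace ℂ (Fin n)) (hvi : v i = 0) (hv : v ≠ 0)
    (ω : ℝ) (hω : ω = ‖v‖) (t : ℝ) :
    matVec (NormedSpace.exp ((-(Complex.I * (t : ℂ))) • coupleH i v))
        (EuclideanSpace.single i 1) =
      ((Real.cos (ω * t) : ℂ)) • EuclideanSpace.single i 1 -
        (Complex.I * ((Real.sin (ω * t) / ω : ℝ) : ℂ)) • v := by
  classical
  set c : ℂ := -(Complex.I * (t : ℂ)) with hc
  set H : Matrix (Fin n) (Fin n) ℂ := coupleH i v with hH
  set e : EuclideanSpace ℂ (Fin n) := EuclideanSpace.single i 1 with he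
  have hω0 : ω ≠ 0 := by
    rw [hω]; exact norm_ne_zero_iff.mpr hv
  have hωC : (ω : ℂ) ≠ 0 := by exact_mod_cast hω0
  -- basic action of H
  have h1 : matVec H e = v := by
    ext j
    simp [matVec_apply, hH, coupleH, he, EuclideanSpace.single_apply, add_mul,
      Finset.sum_add_distrib, Finset.sum_ite_eq', hvi]
  have hsumvv : ∑ k, (starRingEnd ℂ) (v k) * v k = ((ω : ℂ)) ^ 2 := by
    have := inner_self_eq_norm_sq_to_K (𝕜 := ℂ) v
    rw [PiLp.inner_apply] at this
    simpa [hω, RCLike.inner_apply, Complex.conj_mul'] using this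
  have h2 : matVec H v = ((ω : ℂ) ^ 2) • e := by
    ext j
    simp only [matVec_apply, hH, coupleH, add_mul, Finset.sum_add_distrib]
    by_cases hj : j = i
    · subst hj
      simp [hsumvv, hvi, he, EuclideanSpace.single_apply, Finset.sum_ite_eq']
    · simp [hj, hvi, he, EuclideanSpace.single_apply, Finset.sum_ite_eq']
  -- powers of H on e
  have hpow : ∀ m : ℕ, matVec (H ^ (2 * m)) e = ((ω : ℂ) ^ (2 * m)) • e ∧
      matVec (H ^ (2 * m + 1)) e = ((ω : ℂ) ^ (2 * m)) • v := by
    intro m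
    induction m with
    | zero => simp [matVec_one, pow_one, h1]
    | succ m ih =>
      have heven : matVec (H ^ (2 * (m + 1))) e = ((ω : ℂ) ^ (2 * (m + 1))) • e := by
        have : 2 * (m + 1) = (2 * m + 1) + 1 := by ring
        rw [this, pow_succ' H, matVec_mul, ih.2, matVec_smulV, h2, smul_smul]
        congr 1
        ring
      refine ⟨heven, ?_⟩
      rw [pow_succ' H, matVec_mul, heven, matVec_smulV, h1]
  -- map the exponential series through the continuous linear evaluation map
  let φL : Matrix (Fin n) (Fin n) ℂ →ₗ[ℂ] EuclideanSpace ℂ (Fin n) :=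
    { toFun := fun M => matVec M e
      map_add' := fun M N => matVec_addM M N e
      map_smul' := fun a M => matVec_smulM a M e }
  let φ := LinearMap.toContinuousLinearMap φL
  have hexp : HasSum (fun k : ℕ => ((k.factorial : ℂ))⁻¹ • (c • H) ^ k)
      (NormedSpace.exp (c • H)) := NormedSpace.exp_series_hasSum_exp' (c • H)
  have hsum1 : HasSum (fun k : ℕ => φ (((k.factorial : ℂ))⁻¹ • (c • H) ^ k))
      (φ (NormedSpace.exp (c • H))) := φ.hasSum hexp
  have hterm : ∀ k : ℕ, φ (((k.factorial : ℂ))⁻¹ • (c • H) ^ k)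
      = (((k.factorial : ℂ))⁻¹ * c ^ k) • matVec (H ^ k) e := by
    intro k
    show matVec (((k.factorial : ℂ))⁻¹ • (c • H) ^ k) e = _
    rw [smul_pow, matVec_smulM, matVec_smulM, smul_smul]
  -- the target sum
  have hc2 : c ^ 2 = -((t : ℂ) ^ 2) := by
    rw [hc, neg_pow, mul_pow, Complex.I_sq]
    ring
  set g : ℕ → EuclideanSpace ℂ (Fin n) :=
    fun k => (((k.factorial : ℂ))⁻¹ * c ^ k) • matVec (H ^ k) e with hg
  have hck : ∀ m : ℕ, c ^ (2 * m) = (-1 : ℂ) ^ m * (t : ℂ) ^ (2 * m) := by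
    intro m
    rw [pow_mul, hc2, neg_pow, pow_mul]
  have gEven : ∀ m : ℕ, g (2 * m) =
      ((-1 : ℂ) ^ m * (((ω * t : ℝ)) : ℂ) ^ (2 * m) / (((2 * m).factorial : ℂ))) • e := by
    intro m
    rw [hg]
    simp only
    rw [(hpow m).1, smul_smul]
    congr 1
    rw [hck m]
    push_cast
    field_simp
    ring
  have gOdd : ∀ m : ℕ, g (2 * m + 1) =
      (-(Complex.I / (ω : ℂ)) *
        ((-1 : ℂ) ^ m * (((ω * t : ℝ)) : ℂ) ^ (2 * m + 1) / (((2 * m + 1).factorial : ℂ)))) • v := by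
    intro m
    rw [hg]
    simp only
    rw [(hpow m).2, smul_smul]
    congr 1
    have hsplit : (((ω * t : ℝ)) : ℂ) ^ (2 * m + 1)
        = (ω : ℂ) * ((ω : ℂ) ^ (2 * m) * (t : ℂ) ^ (2 * m + 1)) := by
      push_cast
      ring
    rw [pow_succ, hck m, hc, hsplit]
    linear_combination (Complex.I * (-1 : ℂ) ^ m * (ω : ℂ) ^ (2 * m) * (t : ℂ) ^ (2 * m + 1) *
      ((((2 * m + 1).factorial : ℕ) : ℂ))⁻¹) * mul_inv_cancel₀ hωC
  have hcos : HasSum (fun m : ℕ => g (2 * m)) ((((Real.cos (ω * t)) : ℝ) : ℂ) • e) := by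
    have hs := (Complex.hasSum_cos ((ω * t : ℝ) : ℂ)).smul_const e
    rw [Complex.ofReal_cos]
    rw [show (fun m : ℕ => g (2 * m)) = _ from funext gEven]
    exact hs
  have hsin : HasSum (fun m : ℕ => g (2 * m + 1))
      ((-(Complex.I * (((Real.sin (ω * t) / ω : ℝ)) : ℂ))) • v) := by
    have hs := ((Complex.hasSum_sin ((ω * t : ℝ) : ℂ)).mul_left
      (-(Complex.I / (ω : ℂ)))).smul_const v
    have hval : -(Complex.I / (ω : ℂ)) * Complex.sin (((ω * t : ℝ)) : ℂ)
        = -(Complex.I * (((Real.sin (ω * t) / ω : ℝ)) : ℂ)) := by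
      push_cast [Complex.ofReal_sin]
      ring
    rw [hval] at hs
    rw [show (fun m : ℕ => g (2 * m + 1)) = _ from funext gOdd]
    exact hs
  have hgsum : HasSum g (((((Real.cos (ω * t)) : ℝ)) : ℂ) • e +
      (-(Complex.I * (((Real.sin (ω * t) / ω : ℝ)) : ℂ))) • v) :=
    HasSum.even_add_odd hcos hsin
  -- identify with the exponential sum
  have hfun : (fun k : ℕ => φ (((k.factorial : ℂ))⁻¹ • (c • H) ^ k)) = g := by
    funext k
    rw [hterm k, hg]
  rw [hfun] at hsum1
  have hfinal : φ (NormedSpace.exp (c • H)) =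
      (((((Real.cos (ω * t)) : ℝ)) : ℂ)) • e +
        (-(Complex.I * (((Real.sin (ω * t) / ω : ℝ)) : ℂ))) • v :=
    hsum1.unique hgsum
  have : φ (NormedSpace.exp (c • H)) = matVec (NormedSpace.exp (c • H)) e := rfl
  rw [← this, hfinal, sub_eq_add_neg, neg_smul]
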